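/- arXiv:math/9808125 — 7 statements merged into one kernel-verified Lean document; each statement's English description precedes it below -/
import Mathlib

section
/- Let g be a linear operator on a finite-dimensional vector space over a field of characteristic zero such that (g^m - 1)^2 = 0 for some positive integer m. If g is unipotent, then (g - 1)^2 = 0. -/
/-!
Write `g ^ m - 1 = (g - 1) * u` with `u = ∑ i < m, g ^ i`. When `g - 1` is nilpotent, `u` is `m`
plus a nilpotent element commuting with it, hence a unit as `m` is invertible in characteristic
zero. Since `u` commutes with `g - 1`, `(g ^ m - 1) ^ 2 = (g - 1) ^ 2 * u ^ 2`, and cancelling the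
unit `u ^ 2` gives `(g - 1) ^ 2 = 0`.
-/

open Finset

section Ring

variable {R : Type*} [Ring R] {x : R}

lemma IsNilpotent.pow_sub_one (h : IsNilpotent (x - 1)) (i : ℕ) : IsNilpotent (x ^ i - 1) := by
  rw [← mul_geom_sum]
  exact (Commute.sub_left (Commute.sum_right _ _ _ fun j _ => Commute.pow_right rfl j)
    (Commute.one_left _)).isNilpotent_mul_right h

lemma IsNilpotent.isUnit_geom_sum (h : IsNilpotent (x - 1)) {m : ℕ} (hm : IsUnit (m : R)) :
    IsUnit (∑ i ∈ range m, x ^ i) := by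
  have hsplit : ∑ i ∈ range m, x ^ i = m + ∑ i ∈ range m, (x ^ i - 1) := by
    simp [sum_sub_distrib]
  rw [hsplit]
  refine IsNilpotent.isUnit_add_left_of_commute ?_ hm (Nat.cast_commute _ _).symm
  refine Commute.isNilpotent_sum (fun i _ => h.pow_sub_one i) fun i j _ _ => ?_
  exact ((Commute.pow_pow_self x i j).sub_right (Commute.one_right _)).sub_left
    (Commute.one_left _)

lemma pow_sub_one_pow_eq_zero_iff_of_isNilpotent (h : IsNilpotent (x - 1)) {m : ℕ}
    (hm : IsUnit (m : R)) (k : ℕ) : (x ^ m - 1) ^ k = 0 ↔ (x - 1) ^ k = 0 := by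
  have hcomm : Commute (x - 1) (∑ i ∈ range m, x ^ i) :=
    (Commute.sum_right _ _ _ fun j _ => Commute.pow_right rfl j).sub_left (Commute.one_left _)
  rw [← mul_geom_sum, hcomm.mul_pow]
  exact ((h.isUnit_geom_sum hm).pow k).mul_left_eq_zero

end Ring

theorem lemma_level2_unipotent_general {K V : Type*} [Field K] [CharZero K] [AddCommGroup V]
    [Module K V] (g : Module.End K V) (m : ℕ) (hm : 0 < m)
    (h : (g ^ m - 1) ^ 2 = 0) (hunip : ∃ N : ℕ, (g - 1) ^ N = 0) :
    (g - 1) ^ 2 = 0 := by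
  have hm_unit : IsUnit (m : Module.End K V) := by
    rw [← map_natCast (algebraMap K (Module.End K V))]
    exact (Nat.cast_ne_zero.mpr hm.ne').isUnit.map _
  exact (pow_sub_one_pow_eq_zero_iff_of_isNilpotent hunip hm_unit 2).mp h

/-- If `(g^m - 1)^2 = 0` for some positive integer `m` and `g` is unipotent,
then `(g - 1)^2 = 0`. -/
theorem lemma_level2_unipotent {K V : Type*} [Field K] [CharZero K] [AddCommGroup V]
    [Module K V] [FiniteDimensional K V] (g : Module.End K V) (m : ℕ) (hm : 0 < m)
    (h : (g ^ m - 1) ^ 2 = 0) (hunip : ∃ N : ℕ, (g - 1) ^ N = 0) :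
    (g - 1) ^ 2 = 0 :=
  lemma_level2_unipotent_general g m hm h hunip
end

section
/- Let g be a linear operator on a finite-dimensional vector space over a field of characteristic zero such that (g^m - 1)^2 = 0 for some positive integer m. If -g is unipotent, then (g + 1)^2 = 0. -/
/-!
Put `u = g + 1`, which is nilpotent. The polynomial `(X - 1)^(2m) - 1` vanishes at `0` with
derivative `-2m` there, so `g^(2m) - 1 = u * w` with `w ≡ -2m` modulo `u`; as `2m` is invertible
in characteristic zero and `u` is nilpotent, `w` is a unit commuting with `u`. Since
`(g^(2m) - 1)^2` is a multiple of `(g^m - 1)^2 = 0`, we get `u^2 * w^2 = 0`, hence `u^2 = 0`.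
-/

open Polynomial

theorem Polynomial.X_sq_dvd_X_add_C_pow_sub {R : Type*} [CommRing R] (r : R) (n : ℕ) :
    X ^ 2 ∣ (X + C r) ^ n - (C (r ^ n) + C (n * r ^ (n - 1)) * X) := by
  rw [X_pow_dvd_iff]
  intro d hd
  interval_cases d <;> simp [coeff_X_add_C_pow, -map_pow, coeff_C, mul_comm]

theorem Even.natCast_mul_neg_one_pow_sub_one {R : Type*} [Ring R] {n : ℕ} (hn : Even n) :
    (n : R) * (-1) ^ (n - 1) = -n := by
  rcases n.eq_zero_or_pos with rfl | hpos
  · simp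
  · rw [(Nat.Even.sub_odd hpos hn odd_one).neg_one_pow, mul_neg_one]

theorem IsNilpotent.exists_isUnit_sub_one_pow_sub_one_eq_mul {A : Type*} [Ring A] {u : A}
    (hu : IsNilpotent u) {n : ℕ} (hn : Even n) (hunit : IsUnit (n : A)) :
    ∃ w : A, IsUnit w ∧ Commute u w ∧ (u - 1) ^ n - 1 = u * w := by
  obtain ⟨S, hS⟩ := X_sq_dvd_X_add_C_pow_sub (-1 : ℤ) n
  have hcomm : Commute u (aeval u S) := by
    simpa using (Commute.all X S).map (aeval u)
  refine ⟨u * aeval u S - n, ?_, ?_, ?_⟩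
  · rw [sub_eq_neg_add]
    exact (hcomm.isNilpotent_mul_right hu).isUnit_add_left_of_commute hunit.neg
      (Nat.cast_commute n _).neg_left.symm
  · exact ((Commute.refl u).mul_right hcomm).sub_right (Nat.cast_commute n u).symm
  · rw [hn.natCast_mul_neg_one_pow_sub_one, hn.neg_one_pow] at hS
    have hexp := congrArg (aeval u) hS
    simp only [map_sub, map_add, map_mul, map_pow, map_neg, aeval_X, map_one, map_natCast,
      neg_mul] at hexp
    rw [mul_sub, ← mul_assoc, ← sq, ← hexp, ← Nat.cast_comm, sub_eq_add_neg u]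
    abel

theorem lemma_level2_neg_unipotent_general {K V : Type*} [Field K] [CharZero K] [AddCommGroup V]
    [Module K V] (g : Module.End K V) (m : ℕ) (hm : 0 < m)
    (h : (g ^ m - 1) ^ 2 = 0) (hunip : ∃ N : ℕ, (g + 1) ^ N = 0) :
    (g + 1) ^ 2 = 0 := by
  have hunit : IsUnit ((2 * m : ℕ) : Module.End K V) := by
    rw [← map_natCast (algebraMap K (Module.End K V))]
    exact (isUnit_iff_ne_zero.mpr (Nat.cast_ne_zero.mpr (by omega))).map _
  obtain ⟨w, hw, hcomm, hfac⟩ :=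
    IsNilpotent.exists_isUnit_sub_one_pow_sub_one_eq_mul hunip (even_two_mul m) hunit
  rw [add_sub_cancel_right] at hfac
  have h2m : (g ^ (2 * m) - 1) ^ 2 = 0 := by
    have hc : Commute (g ^ m + 1) (g ^ m - 1) :=
      ((Commute.refl _).add_left (Commute.one_left _)).sub_right (Commute.one_right _)
    rw [pow_mul', sq (g ^ m), mul_self_sub_one, hc.mul_pow, h, mul_zero]
  rw [hfac, hcomm.mul_pow] at h2m
  exact (hw.pow 2).mul_left_eq_zero.mp h2m

/-- If `(g^m - 1)^2 = 0` for some positive integer `m` and `-g` is unipotent,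
then `(g + 1)^2 = 0`. -/
theorem lemma_level2_neg_unipotent {K V : Type*} [Field K] [CharZero K] [AddCommGroup V]
    [Module K V] [FiniteDimensional K V] (g : Module.End K V) (m : ℕ) (hm : 0 < m)
    (h : (g ^ m - 1) ^ 2 = 0) (hunip : ∃ N : ℕ, (g + 1) ^ N = 0) :
    (g + 1) ^ 2 = 0 :=
  lemma_level2_neg_unipotent_general g m hm h hunip
end

section
/- Let A be a g×g matrix over the ℓ-adic integers ℤ_ℓ such that (A - 1)^r ∈ ℓ^m · M_g(ℤ_ℓ) for positive integers m, r. If λ is an eigenvalue of A that is a root of unity and r < m(ℓ - 1), then λ = 1. -/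
/-!
Suppose `λ ≠ 1`. Writing `(A - 1)^r = ℓ^m B`, the number `(λ - 1)^r / ℓ^m` is an eigenvalue of `B`,
hence integral over `ℤ_ℓ`. Its norm from `ℚ_ℓ(λ)` to `ℚ_ℓ` is `± P(1)^r / ℓ^(m d)`, where `P` is the
minimal polynomial of `λ` and `d` its degree, so `ℓ^(m d) ∣ P(1)^r` in `ℤ_ℓ`. Now `P` divides the
cyclotomic polynomial `Φ_n`, `n` the order of `λ`. If `n` is not a power of `ℓ`, then `Φ_n(1)` is
`1` or a prime `q ≠ ℓ`, so `P(1)` is an `ℓ`-adic unit: absurd. If `n = ℓ^(k+1)`, then `Φ_n` is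
Eisenstein at `ℓ` after `X ↦ X + 1`, so `P = Φ_n`, `P(1) = ℓ` and `d = ℓ^k (ℓ - 1)`; hence
`m ℓ^k (ℓ - 1) ≤ r`, contradicting `r < m (ℓ - 1)`.
-/

open Polynomial IntermediateField

theorem Matrix.isIntegral_pow_sub_one_div_of_isRoot_charpoly {R F n : Type*} [CommRing R]
    [Field F] [Algebra R F] [Fintype n] [DecidableEq n] {A B : Matrix n n R} {c : R} {r : ℕ}
    (hAB : (A - 1) ^ r = c • B) (hc : algebraMap R F c ≠ 0) {x : F}
    (hx : (A.map (algebraMap R F)).charpoly.IsRoot x) :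
    IsIntegral R ((x - 1) ^ r / algebraMap R F c) := by
  set φ := algebraMap R F
  have hpow : (A.map φ - 1) ^ r = φ c • B.map φ := by
    rw [← RingHom.mapMatrix_apply, ← map_one φ.mapMatrix, ← map_sub, ← map_pow, hAB]
    ext i j
    simp
  have hB : B.map φ = aeval (A.map φ) (C (φ c)⁻¹ * (X - 1) ^ r) := by
    simp [hpow, Algebra.algebraMap_eq_smul_one, smul_smul, hc]
  have hspec : (x - 1) ^ r / φ c ∈ spectrum F (B.map φ) := by
    rw [hB]
    refine spectrum.subset_polynomial_aeval _ _
      ⟨x, Matrix.mem_spectrum_iff_isRoot_charpoly.mpr hx, ?_⟩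
    simp [div_eq_inv_mul]
  refine ⟨B.charpoly, B.charpoly_monic, ?_⟩
  rw [eval₂_eq_eval_map, ← Matrix.charpoly_map]
  exact Matrix.mem_spectrum_iff_isRoot_charpoly.mp hspec

/-- Up to sign, the element on the right is the norm of `x ^ r / c` from `K⟮x⟯` to `K`. -/
theorem isIntegral_coeff_zero_minpoly_pow_div {R K L : Type*} [CommRing R] [Field K] [Field L]
    [Algebra R K] [Algebra K L] [Algebra R L] [IsScalarTower R K L] {x : L}
    (hx : IsIntegral K x) {c : K} {r : ℕ}
    (h : IsIntegral R (x ^ r / algebraMap K L c)) :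
    IsIntegral R ((minpoly K x).coeff 0 ^ r / c ^ (minpoly K x).natDegree) := by
  set pb := adjoin.powerBasis hx
  have := pb.finite
  have hz : IsIntegral R (pb.gen ^ r / algebraMap K K⟮x⟯ c) := by
    rw [← isIntegral_algHom_iff ((IsScalarTower.toAlgHom K K⟮x⟯ L).restrictScalars R)
      (algebraMap K⟮x⟯ L).injective]
    simpa [pb] using h
  have hnorm : Algebra.norm K (pb.gen ^ r / algebraMap K K⟮x⟯ c) =
      (-1) ^ (pb.dim * r) * ((minpoly K x).coeff 0 ^ r / c ^ (minpoly K x).natDegree) := by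
    rw [div_eq_mul_inv, map_mul, Algebra.norm_inv, map_pow, Algebra.norm_algebraMap,
      Algebra.PowerBasis.norm_gen_eq_coeff_zero_minpoly, pb.finrank]
    simp [pb, minpoly_gen, mul_pow, pow_mul, div_eq_mul_inv, mul_assoc]
  have hsign := (isIntegral_one (R := R) (B := K)).neg.pow (pb.dim * r)
  have := (Algebra.isIntegral_norm K hz).mul hsign
  rwa [hnorm, mul_comm, ← mul_assoc, ← mul_pow, neg_one_mul, neg_neg, one_pow, one_mul] at this

theorem pow_natDegree_minpoly_dvd_eval_one_pow {R : Type*} (K : Type*) {L : Type*} [CommRing R]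
    [IsDomain R] [IsIntegrallyClosed R] [Field K] [Algebra R K] [IsFractionRing R K] [Field L]
    [Algebra R L] [Algebra K L] [IsScalarTower R K L] {x : L} (hx : IsIntegral R x) {c : R}
    (hc : c ≠ 0) {r : ℕ} (h : IsIntegral R ((x - 1) ^ r / algebraMap R L c)) :
    c ^ (minpoly R x).natDegree ∣ (minpoly R x).eval 1 ^ r := by
  have hK := isIntegral_coeff_zero_minpoly_pow_div (hx.tower_top (A := K) |>.sub isIntegral_one)
    (c := algebraMap R K c) (by rwa [← IsScalarTower.algebraMap_apply])
  have hshift : minpoly K (x - 1) = (minpoly K x).comp (X + C 1) := by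
    simpa using minpoly.sub_algebraMap x (1 : K)
  rw [hshift, coeff_zero_eq_eval_zero, eval_comp, natDegree_comp, natDegree_X_add_C, mul_one,
    minpoly.isIntegrallyClosed_eq_field_fractions' K hx, (minpoly.monic hx).natDegree_map] at hK
  simp only [eval_add, eval_X, eval_C, zero_add, eval_one_map, ← map_pow] at hK
  obtain ⟨w, hw⟩ := IsIntegrallyClosed.isIntegral_iff.mp hK
  refine ⟨w, IsFractionRing.injective R K ?_⟩
  rw [map_mul, hw, mul_div_cancel₀]
  exact (map_ne_zero_iff _ (IsFractionRing.injective R K)).mpr (pow_ne_zero _ hc)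

theorem Polynomial.isEisensteinAt_cyclotomic_prime_pow_comp {R : Type*} [CommRing R] [IsDomain R]
    {p : ℕ} [Fact p.Prime] (hp : Prime (p : R)) (k : ℕ) :
    ((cyclotomic (p ^ (k + 1)) R).comp (X + C 1)).IsEisensteinAt (Ideal.span {(p : R)}) := by
  have hZ := cyclotomic_prime_pow_comp_X_add_one_isEisensteinAt p k
  have hmap : ((cyclotomic (p ^ (k + 1)) ℤ).comp (X + 1)).map (Int.castRingHom R) =
      (cyclotomic (p ^ (k + 1)) R).comp (X + C 1) := by
    simp [Polynomial.map_comp, map_cyclotomic]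
  refine ((cyclotomic.monic _ R).comp_X_add_C 1).isEisensteinAt_of_mem_of_notMem ?_
    (fun hn => ?_) ?_
  · rw [Ne, Ideal.span_singleton_eq_top]
    exact hp.not_isUnit
  · rw [← hmap] at hn ⊢
    simpa [Ideal.map_span] using (hZ.isWeaklyEisensteinAt.map (Int.castRingHom R)).mem hn
  · have h0 : ((cyclotomic (p ^ (k + 1)) R).comp (X + C 1)).coeff 0 = p := by
      simp [coeff_zero_eq_eval_zero, eval_comp, eval_one_cyclotomic_prime_pow]
    rw [h0, Ideal.span_singleton_pow, Ideal.mem_span_singleton]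
    intro h
    have : (p : R) ^ 2 ∣ (p : R) ^ 1 := by simpa using h
    exact absurd ((pow_dvd_pow_iff hp.ne_zero hp.not_isUnit).mp this) (by norm_num)

theorem Polynomial.irreducible_cyclotomic_prime_pow {R : Type*} [CommRing R] [IsDomain R]
    {p : ℕ} [Fact p.Prime] (hp : Prime (p : R)) (k : ℕ) :
    Irreducible (cyclotomic (p ^ (k + 1)) R) := by
  have hcomp := (isEisensteinAt_cyclotomic_prime_pow_comp hp k).irreducible
    ((Ideal.span_singleton_prime hp.ne_zero).mpr hp)
    ((cyclotomic.monic _ R).comp_X_add_C 1).isPrimitive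
    (by rw [natDegree_comp, natDegree_X_add_C, mul_one, natDegree_cyclotomic]
        exact Nat.totient_pos.mpr (pow_pos (Fact.out : p.Prime).pos _))
  exact (MulEquiv.irreducible_iff (algEquivAevalXAddC (1 : R)).toMulEquiv).mp hcomp

section IsPrimitiveRoot

variable {R S : Type*} [CommRing R] [IsDomain R] [IsIntegrallyClosed R] [CommRing S] [IsDomain S]
  [Algebra R S] [Module.IsTorsionFree R S] {ζ : S} {n : ℕ}

theorem IsPrimitiveRoot.minpoly_dvd_cyclotomic_of_isIntegrallyClosed (hζ : IsPrimitiveRoot ζ n)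
    (hn : 0 < n) : minpoly R ζ ∣ cyclotomic n R := by
  have hint : IsIntegral R ζ := .of_pow hn (by rw [hζ.pow_eq_one]; exact isIntegral_one)
  refine minpoly.isIntegrallyClosed_dvd hint ?_
  rw [aeval_def, eval₂_eq_eval_map, map_cyclotomic]
  exact hζ.isRoot_cyclotomic hn

theorem IsPrimitiveRoot.minpoly_eq_cyclotomic_of_isIntegrallyClosed (hζ : IsPrimitiveRoot ζ n)
    (hn : 0 < n) (hirr : Irreducible (cyclotomic n R)) : minpoly R ζ = cyclotomic n R := by
  have hint : IsIntegral R ζ := .of_pow hn (by rw [hζ.pow_eq_one]; exact isIntegral_one)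
  exact eq_of_monic_of_associated (minpoly.monic hint) (cyclotomic.monic n R)
    ((minpoly.prime_of_isIntegrallyClosed hint).irreducible.associated_of_dvd hirr
      (hζ.minpoly_dvd_cyclotomic_of_isIntegrallyClosed hn))

end IsPrimitiveRoot

theorem PadicInt.isUnit_eval_one_cyclotomic {ℓ : ℕ} [Fact ℓ.Prime] {n : ℕ}
    (hn : ∀ k, n ≠ ℓ ^ k) : IsUnit ((cyclotomic n ℤ_[ℓ]).eval 1) := by
  by_cases h : ∃ q k, q.Prime ∧ q ^ k = n
  · obtain ⟨q, k, hq, rfl⟩ := h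
    have := Fact.mk hq
    obtain _ | k := k
    · exact absurd (pow_zero ℓ).symm (by simpa using hn 0)
    have hqℓ : q ≠ ℓ := by
      rintro rfl
      exact hn (k + 1) rfl
    rw [eval_one_cyclotomic_prime_pow, PadicInt.isUnit_iff, PadicInt.norm_natCast_eq_one_iff]
    exact (Nat.coprime_primes Fact.out hq).mpr hqℓ.symm
  · push Not at h
    rw [eval_one_cyclotomic_not_prime_pow fun hq k => h _ k hq]
    exact isUnit_one

theorem PadicInt.isUnit_eval_one_minpoly_or_minpoly_eq_cyclotomic {ℓ : ℕ} [Fact ℓ.Prime]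
    {S : Type*} [CommRing S] [IsDomain S] [Algebra ℤ_[ℓ] S] [Module.IsTorsionFree ℤ_[ℓ] S]
    {ζ : S} (hζ : IsOfFinOrder ζ) (hne : ζ ≠ 1) :
    IsUnit ((minpoly ℤ_[ℓ] ζ).eval 1) ∨
      ∃ k, minpoly ℤ_[ℓ] ζ = cyclotomic (ℓ ^ (k + 1)) ℤ_[ℓ] := by
  have hprim := IsPrimitiveRoot.orderOf ζ
  have hpos := hζ.orderOf_pos
  by_cases hpow : ∃ k, orderOf ζ = ℓ ^ (k + 1)
  · obtain ⟨k, hk⟩ := hpow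
    rw [hk] at hprim hpos
    exact .inr ⟨k, hprim.minpoly_eq_cyclotomic_of_isIntegrallyClosed hpos
      (irreducible_cyclotomic_prime_pow PadicInt.prime_p k)⟩
  · refine .inl (isUnit_of_dvd_unit
      (eval_dvd (hprim.minpoly_dvd_cyclotomic_of_isIntegrallyClosed hpos))
      (isUnit_eval_one_cyclotomic ?_))
    rintro (_ | k) hk
    · exact hne (orderOf_eq_one_iff.mp hk)
    · exact hpow ⟨k, hk⟩

theorem eigenvalue_one_of_lt_general {ℓ : ℕ} [Fact ℓ.Prime] (g m r : ℕ) (hm : 0 < m)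
    (A : Matrix (Fin g) (Fin g) ℤ_[ℓ])
    (hA : ∃ B : Matrix (Fin g) (Fin g) ℤ_[ℓ], (A - 1) ^ r = (ℓ : ℤ_[ℓ]) ^ m • B)
    (lam : AlgebraicClosure ℚ_[ℓ])
    (heig : Polynomial.aeval lam (Matrix.charpoly (A.map (algebraMap ℤ_[ℓ] ℚ_[ℓ]))) = 0)
    (hroot : ∃ n : ℕ, 0 < n ∧ lam ^ n = 1)
    (hlt : r < m * (ℓ - 1)) :
    lam = 1 := by
  obtain ⟨B, hB⟩ := hA
  obtain ⟨n, hn, hlam⟩ := hroot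
  by_contra hne
  have hℓ : Prime (ℓ : ℤ_[ℓ]) := PadicInt.prime_p
  have hint : IsIntegral ℤ_[ℓ] lam := .of_pow hn (by rw [hlam]; exact isIntegral_one)
  have hcharpoly : (A.map (algebraMap ℤ_[ℓ] (AlgebraicClosure ℚ_[ℓ]))).charpoly.IsRoot lam := by
    rwa [IsScalarTower.algebraMap_eq ℤ_[ℓ] ℚ_[ℓ], RingHom.coe_comp, ← Matrix.map_map,
      Matrix.charpoly_map, IsRoot, eval_map_algebraMap]
  have hdvd : (ℓ : ℤ_[ℓ]) ^ (m * (minpoly ℤ_[ℓ] lam).natDegree) ∣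
      (minpoly ℤ_[ℓ] lam).eval 1 ^ r := by
    rw [pow_mul]
    refine pow_natDegree_minpoly_dvd_eval_one_pow ℚ_[ℓ] hint (pow_ne_zero m hℓ.ne_zero)
      (Matrix.isIntegral_pow_sub_one_div_of_isRoot_charpoly hB ?_ hcharpoly)
    simp [(Fact.out : ℓ.Prime).ne_zero]
  have : Module.IsTorsionFree ℤ_[ℓ] (AlgebraicClosure ℚ_[ℓ]) := .trans_faithfulSMul ℤ_[ℓ] ℚ_[ℓ] _
  rcases PadicInt.isUnit_eval_one_minpoly_or_minpoly_eq_cyclotomic (ℓ := ℓ)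
    (isOfFinOrder_iff_pow_eq_one.mpr ⟨n, hn, hlam⟩) hne with hunit | ⟨k, hk⟩
  · have hD : 0 < m * (minpoly ℤ_[ℓ] lam).natDegree := Nat.mul_pos hm (minpoly.natDegree_pos hint)
    exact hℓ.not_isUnit (isUnit_of_dvd_unit ((dvd_pow_self _ hD.ne').trans hdvd) (hunit.pow r))
  · rw [hk, eval_one_cyclotomic_prime_pow, natDegree_cyclotomic,
      Nat.totient_prime_pow_succ Fact.out, pow_dvd_pow_iff hℓ.ne_zero hℓ.not_isUnit] at hdvd
    have : ℓ - 1 ≤ ℓ ^ k * (ℓ - 1) := Nat.le_mul_of_pos_left _ (pow_pos (Fact.out : ℓ.Prime).pos k)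
    nlinarith

/-- Minkowski–Serre: if `(A - 1)^r ∈ ℓ^m M_g(ℤ_ℓ)` and `λ` is an eigenvalue of `A`
which is a root of unity, with `r < m(ℓ - 1)`, then `λ = 1`. -/
theorem eigenvalue_one_of_lt {ℓ : ℕ} [Fact ℓ.Prime] (g m r : ℕ) (hm : 0 < m) (hr : 0 < r)
    (A : Matrix (Fin g) (Fin g) ℤ_[ℓ])
    (hA : ∃ B : Matrix (Fin g) (Fin g) ℤ_[ℓ], (A - 1) ^ r = (ℓ : ℤ_[ℓ]) ^ m • B)
    (lam : AlgebraicClosure ℚ_[ℓ])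
    (heig : Polynomial.aeval lam (Matrix.charpoly (A.map (algebraMap ℤ_[ℓ] ℚ_[ℓ]))) = 0)
    (hroot : ∃ n : ℕ, 0 < n ∧ lam ^ n = 1)
    (hlt : r < m * (ℓ - 1)) :
    lam = 1 :=
  eigenvalue_one_of_lt_general g m r hm A hA lam heig hroot hlt
end

section
/- Let λ be a root of unity in the ring of algebraic integers such that (λ - 1)^r ∈ n·Z̄ for positive integers n, r. If n is not a prime power ℓ^m with m(ℓ-1) ≤ r (i.e., n ∉ N(r)), then λ = 1. -/
/-- If `λ` is an algebraic integer which is a root of unity, `(λ - 1)^r` is divisible by `n`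
in the ring of algebraic integers, and `n ∉ N(r)` (i.e., `n` is not a prime power `ℓ^m` with
`m(ℓ-1) ≤ r`), then `λ = 1`. -/
theorem root_of_unity_eq_one (n r : ℕ) (hn : 0 < n) (hr : 0 < r)
    (lam : AlgebraicClosure ℚ) (hint : IsIntegral ℤ lam)
    (hroot : ∃ k : ℕ, 0 < k ∧ lam ^ k = 1)
    (hdiv : ∃ β : AlgebraicClosure ℚ, IsIntegral ℤ β ∧ (lam - 1) ^ r = (n : AlgebraicClosure ℚ) * β)
    (hN : ¬ ∃ ℓ m : ℕ, ℓ.Prime ∧ n = ℓ ^ m ∧ m * (ℓ - 1) ≤ r) :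
    lam = 1 := by
  by_contra hlam
  obtain ⟨k0, hk0, hk0eq⟩ := hroot
  have hfin : IsOfFinOrder lam := isOfFinOrder_iff_pow_eq_one.2 ⟨k0, hk0, hk0eq⟩
  set k := orderOf lam with hkdef
  have hkpos : 0 < k := hfin.orderOf_pos
  haveI : NeZero k := ⟨hkpos.ne'⟩
  have hprim : IsPrimitiveRoot lam k := IsPrimitiveRoot.orderOf lam
  have hk1 : k ≠ 1 := fun h => hlam (orderOf_eq_one_iff.1 h)
  have hn2 : 2 ≤ n := by
    by_contra h
    push_neg at h
    have hn1 : n = 1 := by omega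
    subst hn1
    exact hN ⟨2, 0, Nat.prime_two, rfl, by omega⟩
  obtain ⟨β, hβ, hβeq⟩ := hdiv
  set Φ : ℤ := Polynomial.eval 1 (Polynomial.cyclotomic k ℤ) with hΦdef
  set φk := k.totient with hφkdef
  have hφpos : 0 < φk := Nat.totient_pos.2 hkpos
  -- key factorization : Φ = (1 - lam)^φk * C with C integral
  have key : ∃ C : AlgebraicClosure ℚ, IsIntegral ℤ C ∧ ((Φ : AlgebraicClosure ℚ)) = (1 - lam) ^ φk * C := by
    have hc : ∀ μ : AlgebraicClosure ℚ, ∃ c : AlgebraicClosure ℚ, IsIntegral ℤ c ∧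
        (μ ∈ primitiveRoots k (AlgebraicClosure ℚ) → 1 - μ = (1 - lam) * c) := by
      intro μ
      by_cases hμ : μ ∈ primitiveRoots k (AlgebraicClosure ℚ)
      · have hμk : μ ^ k = 1 := ((mem_primitiveRoots hkpos).1 hμ).pow_eq_one
        obtain ⟨j, hj, hje⟩ := hprim.eq_pow_of_pow_eq_one hμk
        refine ⟨∑ i ∈ Finset.range j, lam ^ i, ?_, fun _ => ?_⟩
        · have : (∑ i ∈ Finset.range j, lam ^ i) ∈ integralClosure ℤ (AlgebraicClosure ℚ) :=
            Subalgebra.sum_mem _ fun i _ => Subalgebra.pow_mem _ hint i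
          exact this
        · have hg := geom_sum_mul lam j
          rw [← hje]
          linear_combination hg
      · exact ⟨0, isIntegral_zero, fun h => absurd h hμ⟩
    choose c hci hce using hc
    refine ⟨∏ μ ∈ primitiveRoots k (AlgebraicClosure ℚ), c μ, ?_, ?_⟩
    · have : (∏ μ ∈ primitiveRoots k (AlgebraicClosure ℚ), c μ) ∈ integralClosure ℤ (AlgebraicClosure ℚ) :=
        Subalgebra.prod_mem _ fun μ _ => hci μ
      exact this
    · have hfact := Polynomial.cyclotomic_eq_prod_X_sub_primitiveRoots hprim
      have heval : ((Φ : AlgebraicClosure ℚ)) = ∏ μ ∈ primitiveRoots k (AlgebraicClosure ℚ), (1 - μ) := by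
        have h1 : Polynomial.map (Int.castRingHom (AlgebraicClosure ℚ)) (Polynomial.cyclotomic k ℤ)
            = Polynomial.cyclotomic k (AlgebraicClosure ℚ) := Polynomial.map_cyclotomic _ _
        have h2 := congrArg (Polynomial.eval (1 : AlgebraicClosure ℚ)) h1
        rw [Polynomial.eval_map, Polynomial.eval₂_at_one] at h2
        rw [hfact] at h2
        simpa [Polynomial.eval_prod] using h2
      rw [heval, Finset.prod_congr rfl (fun μ hμ => hce μ hμ), Finset.prod_mul_distrib,
        Finset.prod_const, hprim.card_primitiveRoots]
  obtain ⟨C, hC, hCe⟩ := key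
  -- (Φ:F)^r = (n:F)^φk * γ with γ integral
  set γ : AlgebraicClosure ℚ := (-1 : AlgebraicClosure ℚ) ^ (φk * r) * C ^ r * β ^ φk with hγdef
  have hγ : IsIntegral ℤ γ := by
    have : γ ∈ integralClosure ℤ (AlgebraicClosure ℚ) := by
      refine Subalgebra.mul_mem _ (Subalgebra.mul_mem _ ?_ (Subalgebra.pow_mem _ hC r))
        (Subalgebra.pow_mem _ hβ φk)
      exact Subalgebra.pow_mem _ (Subalgebra.neg_mem _ (Subalgebra.one_mem _)) _
    exact this
  have hΦr : ((Φ : AlgebraicClosure ℚ)) ^ r = (n : AlgebraicClosure ℚ) ^ φk * γ := by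
    have e1 : ((1 - lam) ^ φk * C) ^ r = (1 - lam) ^ (φk * r) * C ^ r := by
      rw [mul_pow, ← pow_mul]
    have e2 : (1 - lam) ^ (φk * r) = (-1 : AlgebraicClosure ℚ) ^ (φk * r) * (lam - 1) ^ (φk * r) := by
      rw [← mul_pow]; ring_nf
    have e3 : (lam - 1) ^ (φk * r) = ((lam - 1) ^ r) ^ φk := by
      rw [← pow_mul, mul_comm]
    rw [hCe, e1, e2, e3, hβeq, mul_pow, hγdef]
    ring
  have hnF : ((n : AlgebraicClosure ℚ)) ^ φk ≠ 0 := pow_ne_zero _ (Nat.cast_ne_zero.2 (by omega))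
  set q : ℚ := (Φ : ℚ) ^ r / (n : ℚ) ^ φk with hqdef
  have hmapq : algebraMap ℚ (AlgebraicClosure ℚ) q = γ := by
    have hq1 : algebraMap ℚ (AlgebraicClosure ℚ) q = ((Φ : AlgebraicClosure ℚ)) ^ r / ((n : AlgebraicClosure ℚ)) ^ φk := by
      rw [hqdef, map_div₀, map_pow, map_pow]
      push_cast
      norm_num
    rw [hq1, div_eq_iff hnF, hΦr]
    ring
  have hqint : IsIntegral ℤ q := by
    have h := hγ
    rw [← hmapq] at h
    exact (isIntegral_algebraMap_iff (algebraMap ℚ (AlgebraicClosure ℚ)).injective).1 h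
  obtain ⟨z, hz⟩ := IsIntegrallyClosed.isIntegral_iff.1 hqint
  have hdvdZ : ((n : ℤ)) ^ φk ∣ Φ ^ r := by
    refine ⟨z, ?_⟩
    have hQ : ((Φ : ℚ)) ^ r = ((n : ℚ)) ^ φk * (z : ℚ) := by
      have hz' : (z : ℚ) = q := hz
      rw [hz', hqdef]
      field_simp
    exact_mod_cast hQ
  by_cases hpp : IsPrimePow k
  · obtain ⟨ℓ, m, hℓp, hm, hkeq⟩ := hpp
    have hℓnat : ℓ.Prime := Nat.prime_iff.2 hℓp
    haveI : Fact ℓ.Prime := ⟨hℓnat⟩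
    have hΦℓ : Φ = ℓ := by
      rw [hΦdef, ← hkeq, show m = (m - 1) + 1 by omega,
        Polynomial.eval_one_cyclotomic_prime_pow]
    have hdvdN : n ^ φk ∣ ℓ ^ r := by
      have := hdvdZ
      rw [hΦℓ] at this
      exact_mod_cast this
    have hnℓ : n ∣ ℓ ^ r := dvd_trans (dvd_pow_self n hφpos.ne') hdvdN
    obtain ⟨s, hsr, hns⟩ := (Nat.dvd_prime_pow hℓnat).1 hnℓ
    have hsφ : s * φk ≤ r := by
      have : ℓ ^ (s * φk) ∣ ℓ ^ r := by
        rw [pow_mul, ← hns]; exact hdvdN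
      exact (Nat.pow_dvd_pow_iff_le_right hℓnat.one_lt).1 this
    have hφge : ℓ - 1 ≤ φk := by
      have : φk = ℓ ^ (m - 1) * (ℓ - 1) := by
        rw [hφkdef, ← hkeq, Nat.totient_prime_pow hℓnat hm]
      rw [this]
      calc ℓ - 1 = 1 * (ℓ - 1) := (one_mul _).symm
        _ ≤ ℓ ^ (m - 1) * (ℓ - 1) :=
          Nat.mul_le_mul_right _ (Nat.one_le_pow _ _ hℓnat.pos)
    exact hN ⟨ℓ, s, hℓnat, hns, le_trans (Nat.mul_le_mul_left s hφge) (by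
      calc s * φk ≤ r := hsφ)⟩
  · have hΦ1 : Φ = 1 := by
      rw [hΦdef]
      refine Polynomial.eval_one_cyclotomic_not_prime_pow ?_
      intro p hp j hje
      rcases Nat.eq_zero_or_pos j with rfl | hj
      · exact hk1 (by simpa using hje.symm)
      · exact hpp ⟨p, j, Nat.prime_iff.1 hp, hj, hje⟩
    rw [hΦ1, one_pow] at hdvdZ
    have : (n : ℤ) ^ φk = 1 := Int.eq_one_of_dvd_one (by positivity) hdvdZ
    have hn1 : n ^ φk = 1 := by exact_mod_cast this
    have h2 : 1 < n ^ φk := Nat.one_lt_pow hφpos.ne' hn2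
    omega
end

section
/- Let V be a finite-dimensional symplectic vector space over a field of characteristic zero, g ∈ Sp(V), and k a positive integer with 0 < k < dim V. If (g - 1)^2 = 0, then (Λ^k(g) - 1)^{k+1} = 0. -/
/-!
Write `g = 1 + N` with `N ^ 2 = 0`, so that `g ^ j = 1 + j • N`. On a decomposable `k`-vector,
`(⋀ᵏ g) ^ j (v₁ ∧ ⋯ ∧ vₖ) = (v₁ + j • N v₁) ∧ ⋯ ∧ (vₖ + j • N vₖ)` is, by multilinearity, a
polynomial of degree at most `k` in `j`. Hence its `(k + 1)`-st forward difference in `j` vanishes,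
and at `j = 0` that forward difference is `(⋀ᵏ g - 1) ^ (k + 1) (v₁ ∧ ⋯ ∧ vₖ)`.
-/

open ExteriorAlgebra

/-- The endomorphism of the `k`-th exterior power induced by an endomorphism. -/
noncomputable def extPow {R M : Type*} [CommRing R] [AddCommGroup M] [Module R M]
    (k : ℕ) (f : M →ₗ[R] M) : Module.End R (⋀[R]^k M) :=
  (ExteriorAlgebra.map f).toLinearMap.restrict (p := ⋀[R]^k M) (q := ⋀[R]^k M) (fun x hx => by
    have mono : ∀ (j : ℕ) (A B : Submodule R (ExteriorAlgebra R M)), A ≤ B → A ^ j ≤ B ^ j := by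
      intro j A B h
      induction j with
      | zero => exact le_rfl
      | succ n ih => rw [pow_succ, pow_succ]; exact mul_le_mul' ih h
    have h1 : Submodule.map (ExteriorAlgebra.map f).toLinearMap (⋀[R]^k M) ≤ ⋀[R]^k M := by
      rw [exteriorPower, Submodule.map_pow, ι_range_map_map]
      refine mono _ _ _ ?_
      rintro z hz
      obtain ⟨y, -, rfl⟩ := hz
      exact LinearMap.mem_range_self _ y
    exact h1 ⟨x, hx, rfl⟩)

open fwdDiff

section fwdDiff

variable {M G H : Type*} [AddCommMonoid M] [AddCommGroup G] [AddCommGroup H]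

theorem fwdDiff_iter_comp_addMonoidHom (L : G →+ H) (f : M → G) (h : M) (n : ℕ) :
    (Δ_[h])^[n] (L ∘ f) = L ∘ (Δ_[h])^[n] f := by
  ext y
  simp [fwdDiff_iter_eq_sum_shift, map_sum, map_zsmul]

theorem fwdDiff_iter_comp_natCast {R : Type*} [Semiring R] (f : R → G) (n m : ℕ) :
    (Δ_[1])^[n] (fun j : ℕ => f j) m = (Δ_[1])^[n] f m := by
  simp [fwdDiff_iter_eq_sum_shift]

end fwdDiff

theorem Module.End.fwdDiff_iter_pow_apply {R M : Type*} [Semiring R] [AddCommGroup M] [Module R M]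
    (S : Module.End R M) (x : M) (n : ℕ) :
    (Δ_[1])^[n] (fun j : ℕ => (S ^ j) x) = fun j => (S ^ j) (((S - 1) ^ n) x) := by
  induction n generalizing x with
  | zero => rfl
  | succ n ih =>
    have hΔ : Δ_[1] (fun j : ℕ => (S ^ j) x) = fun j => (S ^ j) ((S - 1) x) := by
      ext j
      simp [fwdDiff, pow_succ]
    rw [Function.iterate_succ_apply, hΔ, ih, pow_succ, Module.End.mul_apply]

theorem MultilinearMap.map_add_smul_eq_sum_pow {R ι M N : Type*} [CommSemiring R]
    [AddCommMonoid M] [Module R M] [AddCommMonoid N] [Module R N] [Fintype ι] [DecidableEq ι]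
    (f : MultilinearMap R (fun _ : ι => M) N) (v w : ι → M) (r : R) :
    f (v + r • w) = ∑ s : Finset ι, r ^ s.card • f (s.piecewise w v) := by
  rw [add_comm, f.map_add_univ]
  refine Finset.sum_congr rfl fun s _ => ?_
  have hpiece : s.piecewise (r • w) v =
      s.piecewise (fun i => r • s.piecewise w v i) (s.piecewise w v) := by
    ext i
    by_cases hi : i ∈ s <;> simp [hi]
  rw [hpiece, f.map_piecewise_smul, Finset.prod_const]

theorem MultilinearMap.fwdDiff_iter_map_add_smul_eq_zero {R ι M N : Type*} [CommRing R]
    [AddCommGroup M] [Module R M] [AddCommGroup N] [Module R N] [Fintype ι]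
    (f : MultilinearMap R (fun _ : ι => M) N) (v w : ι → M) {n : ℕ} (hn : Fintype.card ι < n) :
    (Δ_[1])^[n] (fun r : R => f (v + r • w)) = 0 := by
  classical
  have hsum : (fun r : R => f (v + r • w)) =
      ∑ s : Finset ι, (LinearMap.toSpanSingleton R N (f (s.piecewise w v))).toAddMonoidHom ∘
        fun r : R => r ^ s.card := by
    ext r
    simp [f.map_add_smul_eq_sum_pow]
  rw [hsum, fwdDiff_iter_finsetSum]
  refine Finset.sum_eq_zero fun s _ => ?_
  rw [fwdDiff_iter_comp_addMonoidHom,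
    fwdDiff_iter_pow_eq_zero_of_lt ((s.card_le_univ).trans_lt hn)]
  ext
  simp

theorem one_add_pow_of_sq_eq_zero {R : Type*} [Semiring R] {a : R} (ha : a ^ 2 = 0) (n : ℕ) :
    (1 + a) ^ n = 1 + n • a := by
  induction n with
  | zero => simp
  | succ n ih =>
    rw [pow_succ, ih, add_mul, one_mul, mul_add, mul_one, smul_mul_assoc, ← sq, ha, smul_zero,
      add_zero, succ_nsmul]
    abel

namespace exteriorPower

variable {R M : Type*} [CommRing R] [AddCommGroup M] [Module R M]

theorem map_pow (k : ℕ) (f : Module.End R M) (j : ℕ) : map k f ^ j = map k (f ^ j) := by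
  induction j with
  | zero => exact map_id.symm
  | succ j ih =>
    rw [pow_succ, ih, pow_succ, Module.End.mul_eq_comp, Module.End.mul_eq_comp, map_comp]

theorem map_sub_one_pow_eq_zero_of_sq_eq_zero (k : ℕ) {f : Module.End R M}
    (hf : (f - 1) ^ 2 = 0) : (map k f - 1) ^ (k + 1) = 0 := by
  refine linearMap_ext (AlternatingMap.ext fun v => ?_)
  set S := map k f
  let F : R → ⋀[R]^k M := fun r => (ιMulti R k).toMultilinearMap (v + r • (⇑(f - 1) ∘ v))
  have hpow (j : ℕ) : (S ^ j) (ιMulti R k v) = F j := by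
    have hfj : f ^ j = 1 + j • (f - 1) := by
      simpa using one_add_pow_of_sq_eq_zero hf j
    rw [map_pow, map_apply_ιMulti, hfj]
    refine congrArg (ιMulti R k) (funext fun i => ?_)
    simp [Nat.cast_smul_eq_nsmul]
  have hΔ := congrFun (Module.End.fwdDiff_iter_pow_apply S (ιMulti R k v) (k + 1)) 0
  rw [pow_zero, Module.End.one_apply] at hΔ
  rw [LinearMap.compAlternatingMap_apply, LinearMap.compAlternatingMap_apply, LinearMap.zero_apply,
    ← hΔ, funext hpow, fwdDiff_iter_comp_natCast F,
    MultilinearMap.fwdDiff_iter_map_add_smul_eq_zero _ _ _ (by simp), Pi.zero_apply]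

end exteriorPower

theorem extPow_eq_map {R M : Type*} [CommRing R] [AddCommGroup M] [Module R M] (k : ℕ)
    (f : Module.End R M) : extPow k f = exteriorPower.map k f := by
  ext v
  simp [extPow, Function.comp_def]

theorem extPow_sub_one_pow_eq_zero_general {K V : Type*} [Field K] [AddCommGroup V] [Module K V]
    (g : Module.End K V) (k : ℕ) (h : (g - 1) ^ 2 = 0) :
    (extPow k g - 1) ^ (k + 1) = 0 := by
  rw [extPow_eq_map]
  exact exteriorPower.map_sub_one_pow_eq_zero_of_sq_eq_zero k h

/-- If $g ∈ Sp(V)$ and $(g-1)^2 = 0$, then $(Λ^k(g) - 1)^{k+1} = 0$. -/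
theorem extPow_sub_one_pow_eq_zero {K V : Type*} [Field K] [CharZero K] [AddCommGroup V]
    [Module K V] [FiniteDimensional K V] (B : LinearMap.BilinForm K V)
    (hB : B.Nondegenerate) (halt : ∀ x : V, B x x = 0)
    (g : Module.End K V) (hgbij : Function.Bijective g)
    (hgB : ∀ x y : V, B (g x) (g y) = B x y)
    (k : ℕ) (hk : 0 < k) (hk' : k < Module.finrank K V)
    (h : (g - 1) ^ 2 = 0) :
    (extPow k g - 1) ^ (k + 1) = 0 :=
  extPow_sub_one_pow_eq_zero_general g k h
end

section
/- The kernel of the restriction ρ_k of Λ^k to Sp(V) (V finite-dimensional symplectic over a field of characteristic zero, 0 < k < dim V) is {1} if k is odd and {1, -1} if k is even. -/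
/-!
If `g` acts trivially on `Λ^k V` with `0 < k < dim V`, then `g v` is a multiple of `v` for every
`v`: otherwise extend `g v, v` to independent vectors `w₀ = g v, w₁ = v, w₂, …, w_k`; then
`w₀ ∧ w₁ ∧ ⋯ ∧ w_k = g v ∧ g w₁ ∧ ⋯ ∧ g w_k`, which vanishes because `g w₁ = g v` is repeated.
So `g = c • 1`, it acts on `Λ^k V` by `c ^ k`, and preserving a nonzero bilinear form forces
`c ^ 2 = 1`.
-/

open ExteriorAlgebra

section CommRing

variable {R M : Type*} [CommRing R] [AddCommGroup M] [Module R M]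

theorem extPow_eq_exteriorPower_map (k : ℕ) (f : M →ₗ[R] M) :
    extPow k f = exteriorPower.map k f := by
  ext v
  simp [extPow, LinearMap.restrict_apply, Function.comp_def]

theorem exteriorPower.map_smul_id (k : ℕ) (c : R) :
    exteriorPower.map k (c • LinearMap.id : M →ₗ[R] M) = c ^ k • LinearMap.id := by
  ext v
  simp [AlternatingMap.map_smul_univ _ (fun _ => c)]

end CommRing

section Field

variable {K E : Type*} [Field K] [AddCommGroup E] [Module K E]

theorem ExteriorAlgebra.ιMulti_ne_zero_of_linearIndependent {n : ℕ} {v : Fin n → E}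
    (hv : LinearIndependent K v) : ιMulti K n v ≠ 0 := by
  have := (exteriorPower.ιMulti_family_linearIndependent_field (n := n) hv).ne_zero
    (Set.powersetCard.ofFinEmbEquiv (OrderIso.refl (Fin n)).toOrderEmbedding)
  simp only [exteriorPower.ιMulti_family, Equiv.symm_apply_apply] at this
  exact fun h => this (Subtype.ext h)

theorem LinearIndependent.exists_extend_fin {m p : ℕ} (hmp : m ≤ p)
    (hp : p ≤ Module.finrank K E) {u : Fin m → E} (hu : LinearIndependent K u) :
    ∃ w : Fin p → E, LinearIndependent K w ∧ ∀ i, w (Fin.castLE hmp i) = u i := by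
  induction p, hmp using Nat.le_induction with
  | base => exact ⟨u, hu, fun i => rfl⟩
  | succ p hmp ih =>
    obtain ⟨w, hw, hwu⟩ := ih (by omega)
    obtain ⟨x, hx⟩ := exists_linearIndependent_snoc_of_lt_finrank hw (by omega)
    refine ⟨Fin.snoc w x, hx, fun i => ?_⟩
    rw [show Fin.castLE _ i = (Fin.castLE hmp i).castSucc from rfl, Fin.snoc_castSucc, hwu]

theorem not_linearIndependent_apply_of_exteriorPower_map_eq_one {k : ℕ} (hk : 0 < k)
    (hkE : k < Module.finrank K E) {g : E →ₗ[K] E} (hg : exteriorPower.map k g = 1) (v : E) :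
    ¬LinearIndependent K ![v, g v] := by
  intro hv
  obtain ⟨w, hw, hwu⟩ := (LinearIndependent.pair_symm_iff.1 hv).exists_extend_fin
    (by omega : 2 ≤ k + 1) hkE
  have hw0 : w 0 = g v := hwu 0
  set i₀ : Fin k := ⟨0, hk⟩
  have hw1 : w i₀.succ = v := hwu 1
  set u : Fin k → E := Fin.tail w
  have hgu : ιMulti K k (g ∘ u) = ιMulti K k u := by
    simpa using congrArg Subtype.val (LinearMap.congr_fun hg (exteriorPower.ιMulti K k u))
  have hu0 : (g ∘ u) i₀ = w 0 := by
    rw [hw0, ← hw1]; rfl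
  apply ιMulti_ne_zero_of_linearIndependent hw
  calc ιMulti K (k + 1) w = ι K (w 0) * ιMulti K k u := ιMulti_succ_apply w
    _ = ι K (w 0) * ιMulti K k (g ∘ u) := by rw [hgu]
    _ = ιMulti K (k + 1) (Fin.cons (w 0) (g ∘ u)) := by simp [Matrix.vecTail]
    _ = 0 := AlternatingMap.map_eq_zero_of_eq _ _ (i := 0) (j := i₀.succ)
      (by rw [Fin.cons_zero, Fin.cons_succ, hu0]) (Fin.succ_ne_zero _).symm

theorem exteriorPower_map_eq_one_iff {k : ℕ} (hk : 0 < k) (hkE : k < Module.finrank K E)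
    {g : E →ₗ[K] E} : exteriorPower.map k g = 1 ↔ ∃ c : K, c ^ k = 1 ∧ g = c • 1 := by
  constructor
  · intro hg
    obtain ⟨c, rfl⟩ := LinearMap.exists_eq_smul_id_of_forall_notLinearIndependent
      (not_linearIndependent_apply_of_exteriorPower_map_eq_one hk hkE hg)
    refine ⟨c, ?_, rfl⟩
    obtain ⟨w, hw, -⟩ := LinearIndependent.exists_extend_fin (Nat.zero_le k) hkE.le
      (linearIndependent_empty_type (ι := Fin 0) (v := Fin.elim0))
    rw [Module.End.one_eq_id, exteriorPower.map_smul_id] at hg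
    have hw_ne : exteriorPower.ιMulti K k w ≠ 0 := fun h =>
      ιMulti_ne_zero_of_linearIndependent hw (congrArg Subtype.val h)
    exact smul_left_injective K hw_ne (by simpa using LinearMap.congr_fun hg _)
  · rintro ⟨c, hc, rfl⟩
    rw [Module.End.one_eq_id, exteriorPower.map_smul_id, hc, one_smul, Module.End.one_eq_id]

end Field

theorem LinearMap.BilinForm.sq_eq_one_of_apply_smul_smul {R M : Type*} [CommRing R]
    [NoZeroDivisors R] [AddCommGroup M] [Module R M] {B : LinearMap.BilinForm R M} (hB : B ≠ 0)
    {c : R} (hc : ∀ x y, B (c • x) (c • y) = B x y) : c ^ 2 = 1 := by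
  obtain ⟨x, y, hxy⟩ : ∃ x y, B x y ≠ 0 := by
    by_contra! h
    exact hB (LinearMap.ext₂ h)
  refine mul_right_cancel₀ hxy ?_
  simpa [pow_two, mul_assoc] using hc x y

theorem kernel_extPow_symplectic_general {ℓ : ℕ} [Fact ℓ.Prime] {V : Type*} [AddCommGroup V]
    [Module ℚ_[ℓ] V] (B : LinearMap.BilinForm ℚ_[ℓ] V)
    (hB : B.Nondegenerate)
    (k : ℕ) (hk : 0 < k) (hk' : k < Module.finrank ℚ_[ℓ] V)
    (g : Module.End ℚ_[ℓ] V)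
    (hgB : ∀ x y : V, B (g x) (g y) = B x y) :
    (Odd k → (extPow k g = 1 ↔ g = 1)) ∧
    (Even k → (extPow k g = 1 ↔ g = 1 ∨ g = -1)) := by
  have : Nontrivial V := Module.nontrivial_of_finrank_pos (R := ℚ_[ℓ]) (by omega)
  have hker : extPow k g = 1 ↔ g = 1 ∨ (g = -1 ∧ (-1 : ℚ_[ℓ]) ^ k = 1) := by
    rw [extPow_eq_exteriorPower_map, exteriorPower_map_eq_one_iff hk hk']
    constructor
    · rintro ⟨c, hck, rfl⟩
      have hc2 := LinearMap.BilinForm.sq_eq_one_of_apply_smul_smul hB.ne_zero hgB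
      rcases sq_eq_one_iff.1 hc2 with rfl | rfl
      · exact .inl (one_smul _ _)
      · exact .inr ⟨neg_one_smul _ _, hck⟩
    · rintro (rfl | ⟨rfl, h⟩)
      · exact ⟨1, one_pow k, (one_smul _ _).symm⟩
      · exact ⟨-1, h, (neg_one_smul _ _).symm⟩
  rw [hker]
  exact ⟨fun hodd => by norm_num [hodd.neg_one_pow], fun heven => by simp [heven.neg_one_pow]⟩

/-- The kernel of $ρ_k : Sp(V) → GL(Λ^k V)$ is $\{1\}$ for $k$ odd and $\{±1\}$
for $k$ even. -/
theorem kernel_extPow_symplectic {ℓ : ℕ} [Fact ℓ.Prime] {V : Type*} [AddCommGroup V]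
    [Module ℚ_[ℓ] V] [FiniteDimensional ℚ_[ℓ] V] (B : LinearMap.BilinForm ℚ_[ℓ] V)
    (hB : B.Nondegenerate) (halt : ∀ x : V, B x x = 0)
    (k : ℕ) (hk : 0 < k) (hk' : k < Module.finrank ℚ_[ℓ] V)
    (g : Module.End ℚ_[ℓ] V) (hgbij : Function.Bijective g)
    (hgB : ∀ x y : V, B (g x) (g y) = B x y) :
    (Odd k → (extPow k g = 1 ↔ g = 1)) ∧
    (Even k → (extPow k g = 1 ↔ g = 1 ∨ g = -1)) :=
  kernel_extPow_symplectic_general B hB k hk hk' g hgB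
end

section
/- Let W be an (ℓ-1)-dimensional vector space over a field of prime characteristic ℓ ≥ 5, and A a unipotent linear operator on W whose Jordan form is a single Jordan block of size ℓ-1. If 2 ≤ r ≤ ℓ-3, then (Λ^r(A) - 1)^{ℓ-1} ≠ 0. -/
/-!
Write `N = A - 1` and `n = ℓ - 1`, and pick `v` and a functional `ξ` with `ξ (N^(n-1) v) ≠ 0`.
Pair `x = v ∧ N v ∧ ⋯ ∧ N^(r-1) v` with the `r`-form `u₁ ∧ ⋯ ∧ u_r ↦ det ξ (N^(n-1-t_j) u_i)`,
where the exponents `t_j < n` are distinct with `∑ t_j = n + ∑ j`; such `t` exist as soon as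
`n ≤ r (n - r)`, which is where `2 ≤ r ≤ ℓ - 3` and `ℓ ≥ 5` enter.
Since `A^m = ∑ₖ (m choose k) N^k`, the value of this form at `Λ^r(A)^m x` is a polynomial `P(m)`
of degree at most `n`, whose coefficient of `m^n` is a nonzero multiple of the Vandermonde
determinant of the `t_j`. The pairing with `(Λ^r(A) - 1)^n x` is the `n`-th forward difference
of `P` at `0`, that is `n! · [m^n] P`, and `n!` is a unit because `n < ℓ`.
-/

open ExteriorAlgebra

open Polynomial Finset Matrix fwdDiff
open scoped Nat

section ForwardDifference

variable {R : Type*} [CommRing R]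

theorem fwdDiff_iter_eval_natCast_zero (P : R[X]) {n : ℕ} (hP : P.natDegree ≤ n) :
    (Δ_[1])^[n] (fun m : ℕ => P.eval (m : R)) 0 = P.coeff n * n ! := by
  have hcast : (Δ_[1])^[n] (fun m : ℕ => P.eval (m : R)) 0 = (Δ_[1])^[n] P.eval 0 := by
    simp only [fwdDiff_iter_eq_sum_shift, zero_add, nsmul_one, Nat.cast_id]
  rw [hcast]
  rcases hP.lt_or_eq with hlt | rfl
  · rw [fwdDiff_iter_eq_zero_of_degree_lt hlt, coeff_eq_zero_of_natDegree_lt hlt, zero_mul]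
    rfl
  · rw [fwdDiff_iter_degree_eq_factorial, leadingCoeff]
    rfl

theorem fwdDiff_iter_apply_pow_apply {V : Type*} [AddCommGroup V] [Module R V]
    (ψ : Module.Dual R V) (g : Module.End R V) (n : ℕ) (x : V) :
    (Δ_[1])^[n] (fun m : ℕ => ψ ((g ^ m) x)) = fun m => ψ ((g ^ m) (((g - 1) ^ n) x)) := by
  induction n generalizing x with
  | zero => simp
  | succ n ih =>
    have hstep : Δ_[1] (fun m : ℕ => ψ ((g ^ m) x)) = fun m => ψ ((g ^ m) ((g - 1) x)) := by
      ext m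
      simp only [fwdDiff, pow_succ, Module.End.mul_apply, ← map_sub, LinearMap.sub_apply,
        Module.End.one_apply]
    rw [Function.iterate_succ_apply, hstep, ih, pow_succ, Module.End.mul_apply]

end ForwardDifference

theorem sum_range_min_tsub_mul (M L r : ℕ) :
    ∑ k ∈ range r, min M (L - k * M) = min (r * M) L := by
  induction r with
  | zero => simp
  | succ r ih =>
    rw [sum_range_succ, ih, add_one_mul]
    omega

theorem exists_injective_sum_eq_add_sum (n r L : ℕ) (hrn : r ≤ n) (hL : L ≤ r * (n - r)) :
    ∃ t : Fin r → ℕ, Function.Injective t ∧ (∀ j, t j < n) ∧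
      ∑ j, t j = L + ∑ j : Fin r, (j : ℕ) := by
  set d : ℕ → ℕ := fun k => min (n - r) (L - k * (n - r))
  have hd_anti : Antitone d := fun k k' hk => by
    have := Nat.mul_le_mul_right (n - r) hk
    simp only [d]
    omega
  refine ⟨fun j => j + d (r - 1 - j), StrictMono.injective fun j j' hj => ?_, fun j => ?_, ?_⟩
  · have := hd_anti (show r - 1 - (j' : ℕ) ≤ r - 1 - j by omega)
    change (j : ℕ) + d (r - 1 - j) < j' + d (r - 1 - j')
    omega
  · have : d (r - 1 - j) ≤ n - r := min_le_left _ _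
    change (j : ℕ) + d (r - 1 - j) < n
    omega
  · rw [sum_add_distrib, add_comm, Fin.sum_univ_eq_sum_range (fun j => d (r - 1 - j)),
      sum_range_reflect d r, sum_range_min_tsub_mul, min_eq_right hL]

section ChoosePoly

variable (K : Type*) [Field K]

noncomputable def choosePoly (k : ℕ) : K[X] :=
  C (k ! : K)⁻¹ * descPochhammer K k

theorem natDegree_choosePoly_le (k : ℕ) : (choosePoly K k).natDegree ≤ k :=
  (natDegree_C_mul_le _ _).trans (descPochhammer_natDegree K k).le

theorem coeff_choosePoly_self (k : ℕ) : (choosePoly K k).coeff k = (k ! : K)⁻¹ := by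
  have := (monic_descPochhammer K k).coeff_natDegree
  rw [descPochhammer_natDegree] at this
  rw [choosePoly, coeff_C_mul, this, mul_one]

variable {K}

theorem eval_natCast_choosePoly {k : ℕ} (hk : (k ! : K) ≠ 0) (m : ℕ) :
    (choosePoly K k).eval (m : K) = m.choose k := by
  rw [choosePoly, eval_mul, eval_C, descPochhammer_eval_eq_descFactorial,
    Nat.descFactorial_eq_factorial_mul_choose, Nat.cast_mul, inv_mul_cancel_left₀ hk]

end ChoosePoly

theorem Nat.cast_factorial_ne_zero_of_le {K : Type*} [Field K] {k n : ℕ} (hn : (n ! : K) ≠ 0)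
    (hk : k ≤ n) : (k ! : K) ≠ 0 :=
  ne_zero_of_dvd_ne_zero hn (Nat.cast_dvd_cast (Nat.factorial_dvd_factorial hk))

theorem Nat.cast_injOn_Iic_of_factorial_ne_zero {K : Type*} [Field K] {n : ℕ}
    (hn : (n ! : K) ≠ 0) : Set.InjOn (Nat.cast : ℕ → K) (Set.Iic n) := by
  suffices ∀ a b, a < b → b ≤ n → (a : K) ≠ b by
    intro a ha b hb hab
    by_contra hne
    rcases Nat.lt_or_gt_of_ne hne with h | h
    · exact this a b h hb hab
    · exact this b a h ha hab.symm
  intro a b hab hb heq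
  have hdvd : ((b - a : ℕ) : K) ∣ (n ! : K) :=
    Nat.cast_dvd_cast (Nat.dvd_factorial (by omega) (by omega))
  rw [Nat.cast_sub hab.le, heq, sub_self, zero_dvd_iff] at hdvd
  exact hn hdvd

section PolynomialMatrix

variable {R ι : Type*} [CommRing R]

theorem coeff_prod_sum_of_natDegree_le (s : Finset ι) (f : ι → R[X]) (d : ι → ℕ)
    (h : ∀ i ∈ s, (f i).natDegree ≤ d i) :
    (∏ i ∈ s, f i).coeff (∑ i ∈ s, d i) = ∏ i ∈ s, (f i).coeff (d i) := by
  induction s using Finset.cons_induction with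
  | empty => simp
  | cons a s ha ih =>
    rw [prod_cons, sum_cons, prod_cons,
      coeff_mul_add_eq_of_natDegree_le (h a (mem_cons_self a s))
        ((natDegree_prod_le _ _).trans (sum_le_sum fun i hi => h i (mem_cons_of_mem hi))),
      ih fun i hi => h i (mem_cons_of_mem hi)]

variable [Fintype ι]

theorem natDegree_prod_perm_le_and_coeff {E : Matrix ι ι R[X]} {a b : ι → ℕ}
    (h : ∀ i j k, a j < b i + k → (E i j).coeff k = 0) (σ : Equiv.Perm ι) :
    (∏ j, E (σ j) j).natDegree ≤ ∑ j, a j - ∑ i, b i ∧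
      (∏ j, E (σ j) j).coeff (∑ j, a j - ∑ i, b i) = ∏ j, (E (σ j) j).coeff (a j - b (σ j)) := by
  have hdeg : ∀ i j, (E i j).natDegree ≤ a j - b i := fun i j =>
    natDegree_le_iff_coeff_eq_zero.mpr fun k hk => h i j k (by omega)
  by_cases hσ : ∀ j, b (σ j) ≤ a j
  · have hsum : ∑ j, (a j - b (σ j)) = ∑ j, a j - ∑ i, b i := by
      rw [sum_tsub_distrib _ fun j _ => hσ j, Equiv.sum_comp σ b]
    rw [← hsum]
    exact ⟨(natDegree_prod_le _ _).trans (sum_le_sum fun j _ => hdeg _ _),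
      coeff_prod_sum_of_natDegree_le _ _ _ fun j _ => hdeg _ _⟩
  · obtain ⟨j, hj⟩ := not_forall.mp hσ
    have hzero : E (σ j) j = 0 := Polynomial.ext fun k => by
      rw [h _ _ k (by omega), coeff_zero]
    have hcoeff : (E (σ j) j).coeff (a j - b (σ j)) = 0 := by rw [hzero, coeff_zero]
    rw [prod_eq_zero (f := fun j => E (σ j) j) (mem_univ j) hzero,
      prod_eq_zero (f := fun j => (E (σ j) j).coeff (a j - b (σ j))) (mem_univ j) hcoeff]
    simp

theorem natDegree_det_le_of_coeff_eq_zero [DecidableEq ι] {E : Matrix ι ι R[X]} {a b : ι → ℕ}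
    (h : ∀ i j k, a j < b i + k → (E i j).coeff k = 0) :
    E.det.natDegree ≤ ∑ j, a j - ∑ i, b i := by
  rw [det_apply']
  refine natDegree_sum_le_of_forall_le _ _ fun σ _ => natDegree_mul_le.trans ?_
  rw [natDegree_intCast, zero_add]
  exact (natDegree_prod_perm_le_and_coeff h σ).1

theorem coeff_det_of_coeff_eq_zero [DecidableEq ι] {E : Matrix ι ι R[X]} {a b : ι → ℕ}
    (h : ∀ i j k, a j < b i + k → (E i j).coeff k = 0) :
    E.det.coeff (∑ j, a j - ∑ i, b i) = (of fun i j => (E i j).coeff (a j - b i)).det := by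
  rw [det_apply', det_apply', finsetSum_coeff]
  refine sum_congr rfl fun σ _ => ?_
  rw [coeff_intCast_mul, (natDegree_prod_perm_le_and_coeff h σ).2]
  rfl

end PolynomialMatrix

theorem det_descFactorial_ne_zero {K : Type*} [Field K] {r : ℕ} (t : Fin r → ℕ)
    (ht : Function.Injective fun j => (t j : K)) :
    (of fun i j : Fin r => ((t j).descFactorial i : K)).det ≠ 0 := by
  have hT : (of fun i j : Fin r => ((t j).descFactorial i : K)) =
      (of fun i j : Fin r => (descPochhammer K j).eval (t i : K))ᵀ := by
    ext i j
    simp [descPochhammer_eval_eq_descFactorial]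
  rw [hT, det_transpose, ← det_eval_matrixOfPolynomials_eq_det_vandermonde _ _
    (fun j => descPochhammer_natDegree K j) (fun j => monic_descPochhammer K j)]
  exact det_vandermonde_ne_zero_iff.mpr ht

section OrbitPoly

variable {K W : Type*} [Field K] [AddCommGroup W] [Module K W]

noncomputable def orbitPoly (n : ℕ) (ξ : Module.Dual K W) (N : Module.End K W) (w : W) : K[X] :=
  ∑ k ∈ range n, C (ξ ((N ^ k) w)) * choosePoly K k

variable {n : ℕ} {ξ : Module.Dual K W} {N : Module.End K W} {w : W}

theorem eval_natCast_orbitPoly (hN : N ^ n = 0) (hn : (n ! : K) ≠ 0) (m : ℕ) :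
    (orbitPoly n ξ N w).eval (m : K) = ξ (((N + 1) ^ m) w) := by
  set f : ℕ → K := fun k => ξ ((N ^ k) w) * m.choose k
  have hf_n : ∀ k ≥ n, f k = 0 := fun k hk => by
    simp only [f, pow_eq_zero_of_le hk hN, LinearMap.zero_apply, map_zero, zero_mul]
  have hf_m : ∀ k ≥ m + 1, f k = 0 := fun k hk => by
    simp only [f, Nat.choose_eq_zero_of_lt hk, Nat.cast_zero, mul_zero]
  calc (orbitPoly n ξ N w).eval (m : K) = ∑ k ∈ range n, f k := by
        simp only [orbitPoly, eval_finsetSum, eval_mul, eval_C]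
        exact sum_congr rfl fun k hk => by
          rw [eval_natCast_choosePoly (Nat.cast_factorial_ne_zero_of_le hn
            (mem_range.mp hk).le)]
    _ = ∑ k ∈ range (m + 1), f k := by
        rw [← eventually_constant_sum hf_n (Nat.le_add_right n (m + 1)),
          ← eventually_constant_sum hf_m (Nat.le_add_left (m + 1) n)]
    _ = ξ (((N + 1) ^ m) w) := by
        simp only [f, (Commute.one_right N).add_pow, LinearMap.sum_apply, map_sum, one_pow,
          mul_one, Module.End.mul_apply, Module.End.natCast_apply, map_nsmul, nsmul_eq_mul,
          mul_comm (m.choose _ : K)]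

theorem coeff_orbitPoly (k : ℕ) :
    (orbitPoly n ξ N w).coeff k = ∑ k' ∈ range n, ξ ((N ^ k') w) * (choosePoly K k').coeff k := by
  simp only [orbitPoly, finsetSum_coeff, coeff_C_mul]

theorem coeff_orbitPoly_eq_zero {k : ℕ} (h : (N ^ k) w = 0) : (orbitPoly n ξ N w).coeff k = 0 := by
  rw [coeff_orbitPoly]
  refine sum_eq_zero fun k' _ => ?_
  rcases lt_or_ge k' k with hlt | hge
  · rw [coeff_eq_zero_of_natDegree_lt ((natDegree_choosePoly_le K k').trans_lt hlt), mul_zero]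
  · rw [Module.End.pow_map_zero_of_le hge h, map_zero, zero_mul]

theorem coeff_orbitPoly_of_pow_succ_eq_zero {k : ℕ} (hk : k < n) (h : (N ^ (k + 1)) w = 0) :
    (orbitPoly n ξ N w).coeff k = ξ ((N ^ k) w) * (k ! : K)⁻¹ := by
  rw [coeff_orbitPoly, sum_eq_single_of_mem k (mem_range.mpr hk), coeff_choosePoly_self]
  intro k' _ hne
  rcases lt_or_gt_of_ne hne with hlt | hgt
  · rw [coeff_eq_zero_of_natDegree_lt ((natDegree_choosePoly_le K k').trans_lt hlt), mul_zero]
  · rw [Module.End.pow_map_zero_of_le hgt h, map_zero, zero_mul]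

end OrbitPoly

section ExteriorPower

theorem extPow_ιMulti {R M : Type*} [CommRing R] [AddCommGroup M] [Module R M] (k : ℕ)
    (f : M →ₗ[R] M) (v : Fin k → M) :
    extPow k f (exteriorPower.ιMulti R k v) = exteriorPower.ιMulti R k (f ∘ v) :=
  Subtype.ext (ExteriorAlgebra.map_apply_ιMulti f v)

theorem extPow_pow_ιMulti {R M : Type*} [CommRing R] [AddCommGroup M] [Module R M] (k : ℕ)
    (f : M →ₗ[R] M) (m : ℕ) (v : Fin k → M) :
    (extPow k f ^ m) (exteriorPower.ιMulti R k v) = exteriorPower.ιMulti R k ((f ^ m) ∘ v) := by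
  induction m with
  | zero => rfl
  | succ m ih =>
    rw [pow_succ', Module.End.mul_apply, ih, extPow_ιMulti, pow_succ']
    rfl

noncomputable def detPairing {R M : Type*} [CommRing R] [AddCommGroup M] [Module R M] (r : ℕ)
    (ψ : Fin r → Module.Dual R M) : Module.Dual R (⋀[R]^r M) :=
  exteriorPower.alternatingMapLinearEquiv (detRowAlternating.compLinearMap (LinearMap.pi ψ))

theorem detPairing_ιMulti {R M : Type*} [CommRing R] [AddCommGroup M] [Module R M] {r : ℕ}
    (ψ : Fin r → Module.Dual R M) (u : Fin r → M) :
    detPairing r ψ (exteriorPower.ιMulti R r u) = (of fun i j => ψ j (u i)).det := by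
  rw [detPairing, exteriorPower.alternatingMapLinearEquiv_apply_ιMulti]
  rfl

end ExteriorPower

section OrbitMatrix

variable {K W : Type*} [Field K] [AddCommGroup W] [Module K W] {n r : ℕ}
  {ξ : Module.Dual K W} {N : Module.End K W} {v : W} {t : Fin r → ℕ}

variable (n ξ N v t) in
noncomputable def orbitMatrix : Matrix (Fin r) (Fin r) K[X] :=
  of fun i j => orbitPoly n ξ N ((N ^ (n - 1 - t j + i)) v)

theorem detPairing_extPow_pow_ιMulti (hN : N ^ n = 0) (hn : (n ! : K) ≠ 0) (m : ℕ) :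
    detPairing r (fun j => ξ ∘ₗ N ^ (n - 1 - t j))
        ((extPow r (N + 1) ^ m) (exteriorPower.ιMulti K r fun i => (N ^ (i : ℕ)) v)) =
      (orbitMatrix n ξ N v t).det.eval (m : K) := by
  have hcomm : ∀ s i : ℕ, N ^ s * (N + 1) ^ m * N ^ i = (N + 1) ^ m * N ^ (s + i) := fun s i => by
    rw [(((Commute.refl N).add_right (Commute.one_right N)).pow_pow s m).eq, mul_assoc, ← pow_add]
  rw [extPow_pow_ιMulti, detPairing_ιMulti, ← coe_evalRingHom, RingHom.map_det]
  congr 1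
  ext i j
  simp only [orbitMatrix, of_apply, RingHom.mapMatrix_apply, map_apply, coe_evalRingHom,
    eval_natCast_orbitPoly hN hn, LinearMap.comp_apply, Function.comp_apply]
  rw [← Module.End.mul_apply, ← Module.End.mul_apply, ← Module.End.mul_apply, hcomm]

theorem coeff_orbitMatrix_eq_zero (hN : N ^ n = 0) (ht : ∀ j, t j < n) {i j : Fin r} {k : ℕ}
    (h : t j < i + k) : (orbitMatrix n ξ N v t i j).coeff k = 0 := by
  refine coeff_orbitPoly_eq_zero ?_
  rw [← Module.End.mul_apply, ← pow_add, pow_eq_zero_of_le (by have := ht j; omega) hN,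
    LinearMap.zero_apply]

theorem coeff_orbitMatrix_sub (hN : N ^ n = 0) (hn : (n ! : K) ≠ 0) (ht : ∀ j, t j < n)
    (i j : Fin r) :
    (orbitMatrix n ξ N v t i j).coeff (t j - i) =
      ξ ((N ^ (n - 1)) v) * ((t j)! : K)⁻¹ * (t j).descFactorial i := by
  have htj := ht j
  by_cases hij : (i : ℕ) ≤ t j
  · have hpow : ∀ e, (N ^ e) ((N ^ (n - 1 - t j + i)) v) = (N ^ (e + (n - 1 - t j + i))) v :=
      fun e => by rw [← Module.End.mul_apply, ← pow_add]
    rw [orbitMatrix, of_apply, coeff_orbitPoly_of_pow_succ_eq_zero (by omega)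
      (by rw [hpow, pow_eq_zero_of_le (by omega) hN, LinearMap.zero_apply]), hpow,
      show t j - i + (n - 1 - t j + i) = n - 1 by omega]
    have hfact := congrArg (Nat.cast : ℕ → K) (Nat.factorial_mul_descFactorial hij)
    push_cast at hfact
    have h₁ : ((t j - i)! : K) ≠ 0 := Nat.cast_factorial_ne_zero_of_le hn (by omega)
    have h₂ : ((t j)! : K) ≠ 0 := Nat.cast_factorial_ne_zero_of_le hn (by omega)
    field_simp
    rw [mul_assoc, hfact]
  · rw [Nat.descFactorial_eq_zero_iff_lt.mpr (by omega), Nat.cast_zero, mul_zero]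
    exact coeff_orbitMatrix_eq_zero hN ht (by omega)

theorem natDegree_det_orbitMatrix_le (hN : N ^ n = 0) (ht : ∀ j, t j < n)
    (hsum : ∑ j, t j = n + ∑ j : Fin r, (j : ℕ)) :
    (orbitMatrix n ξ N v t).det.natDegree ≤ n := by
  have h := natDegree_det_le_of_coeff_eq_zero (E := orbitMatrix n ξ N v t) (a := t)
    (b := fun i : Fin r => (i : ℕ)) fun _ _ _ h => coeff_orbitMatrix_eq_zero hN ht h
  rwa [hsum, Nat.add_sub_cancel] at h

theorem coeff_det_orbitMatrix_ne_zero (hN : N ^ n = 0) (hn : (n ! : K) ≠ 0)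
    (hξ : ξ ((N ^ (n - 1)) v) ≠ 0) (ht_inj : Function.Injective t) (ht : ∀ j, t j < n)
    (hsum : ∑ j, t j = n + ∑ j : Fin r, (j : ℕ)) :
    (orbitMatrix n ξ N v t).det.coeff n ≠ 0 := by
  have h := coeff_det_of_coeff_eq_zero (E := orbitMatrix n ξ N v t) (a := t)
    (b := fun i : Fin r => (i : ℕ)) fun _ _ _ h => coeff_orbitMatrix_eq_zero hN ht h
  have hrow := det_mul_row (fun j => ξ ((N ^ (n - 1)) v) * ((t j)! : K)⁻¹)
    (of fun i j : Fin r => ((t j).descFactorial i : K))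
  simp only [of_apply] at hrow
  simp only [hsum, Nat.add_sub_cancel, coeff_orbitMatrix_sub hN hn ht] at h
  rw [h, hrow]
  refine mul_ne_zero (prod_ne_zero_iff.mpr fun j _ => mul_ne_zero hξ
    (inv_ne_zero (Nat.cast_factorial_ne_zero_of_le hn (ht j).le))) (det_descFactorial_ne_zero t ?_)
  exact fun a b hab => ht_inj (Nat.cast_injOn_Iic_of_factorial_ne_zero hn
    (Set.mem_Iic.mpr (ht a).le) (Set.mem_Iic.mpr (ht b).le) hab)

theorem detPairing_extPow_sub_one_pow (hN : N ^ n = 0) (hn : (n ! : K) ≠ 0)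
    (ht : ∀ j, t j < n) (hsum : ∑ j, t j = n + ∑ j : Fin r, (j : ℕ)) :
    detPairing r (fun j => ξ ∘ₗ N ^ (n - 1 - t j))
        (((extPow r (N + 1) - 1) ^ n) (exteriorPower.ιMulti K r fun i => (N ^ (i : ℕ)) v)) =
      (orbitMatrix n ξ N v t).det.coeff n * n ! := by
  have h := congrFun (fwdDiff_iter_apply_pow_apply (detPairing r fun j => ξ ∘ₗ N ^ (n - 1 - t j))
    (extPow r (N + 1)) n (exteriorPower.ιMulti K r fun i => (N ^ (i : ℕ)) v)) 0
  simp only [pow_zero, Module.End.one_apply, detPairing_extPow_pow_ιMulti hN hn] at h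
  rw [← h]
  exact fwdDiff_iter_eval_natCast_zero _ (natDegree_det_orbitMatrix_le hN ht hsum)

end OrbitMatrix

theorem extPow_sub_one_pow_ne_zero {K W : Type*} [Field K] [AddCommGroup W] [Module K W]
    {n r : ℕ} (hn : (n ! : K) ≠ 0) (hrn : n ≤ r * (n - r)) (A : Module.End K W)
    (hA : (A - 1) ^ n = 0) (hA' : (A - 1) ^ (n - 1) ≠ 0) :
    (extPow r A - 1) ^ n ≠ 0 := by
  set N := A - 1
  have hA_eq : A = N + 1 := (sub_add_cancel A 1).symm
  have hr : r ≤ n := by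
    by_contra hnr
    have hn0 : n = 0 := by
      rw [show n - r = 0 by omega, mul_zero] at hrn
      omega
    exact hA' (by rwa [hn0] at hA ⊢)
  obtain ⟨v, hv⟩ : ∃ v, (N ^ (n - 1)) v ≠ 0 := not_forall.mp fun h => hA' (LinearMap.ext h)
  obtain ⟨ξ, hξ⟩ : ∃ ξ : Module.Dual K W, ξ ((N ^ (n - 1)) v) ≠ 0 :=
    not_forall.mp fun h => hv ((Module.forall_dual_apply_eq_zero_iff K _).mp h)
  obtain ⟨t, ht_inj, ht, hsum⟩ := exists_injective_sum_eq_add_sum n r n hr hrn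
  intro H
  have key := detPairing_extPow_sub_one_pow (ξ := ξ) (v := v) hA hn ht hsum
  rw [← hA_eq, H, LinearMap.zero_apply, map_zero] at key
  exact mul_ne_zero (coeff_det_orbitMatrix_ne_zero hA hn hξ ht_inj ht hsum) hn key.symm

theorem extPow_sub_one_pow_ne_zero_block_general {K W : Type*} [Field K] [AddCommGroup W] [Module K W]
    (ℓ : ℕ) (hℓp : ℓ.Prime) (hℓ5 : 5 ≤ ℓ) [CharP K ℓ]
    (A : Module.End K W)
    (hblock : (A - 1) ^ (ℓ - 1) = 0 ∧ (A - 1) ^ (ℓ - 2) ≠ 0)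
    (r : ℕ) (hr2 : 2 ≤ r) (hr3 : r ≤ ℓ - 3) :
    (extPow r A - 1) ^ (ℓ - 1) ≠ 0 := by
  have hfact : ((ℓ - 1)! : K) ≠ 0 := by
    rw [Ne, CharP.cast_eq_zero_iff K ℓ, hℓp.dvd_factorial]
    omega
  have hr : ℓ - 1 ≤ r * (ℓ - 1 - r) := by
    obtain ⟨a, rfl⟩ : ∃ a, r = a + 2 := ⟨r - 2, by omega⟩
    obtain ⟨b, hb⟩ : ∃ b, ℓ - 1 - (a + 2) = b + 2 := ⟨ℓ - 5 - a, by omega⟩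
    have hℓ : ℓ - 1 = a + b + 4 := by omega
    rw [hb, hℓ]
    nlinarith
  refine extPow_sub_one_pow_ne_zero hfact hr A hblock.1 ?_
  rw [show ℓ - 1 - 1 = ℓ - 2 by omega]
  exact hblock.2

/-- If $W$ has dimension $ℓ-1$ over a field of characteristic $ℓ ≥ 5$ and the unipotent
operator $A$ is a single Jordan block of size $ℓ-1$, then for $2 ≤ r ≤ ℓ-3$ one has
$(Λ^r(A)-1)^{ℓ-1} ≠ 0$. -/
theorem extPow_sub_one_pow_ne_zero_block {K W : Type*} [Field K] [AddCommGroup W] [Module K W]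
    [FiniteDimensional K W] (ℓ : ℕ) (hℓp : ℓ.Prime) (hℓ5 : 5 ≤ ℓ) [CharP K ℓ]
    (hdim : Module.finrank K W = ℓ - 1)
    (A : Module.End K W)
    (hblock : (A - 1) ^ (ℓ - 1) = 0 ∧ (A - 1) ^ (ℓ - 2) ≠ 0)
    (r : ℕ) (hr2 : 2 ≤ r) (hr3 : r ≤ ℓ - 3) :
    (extPow r A - 1) ^ (ℓ - 1) ≠ 0 :=
  extPow_sub_one_pow_ne_zero_block_general ℓ hℓp hℓ5 A hblock r hr2 hr3
end
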